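/- arXiv:1507.08389 — 2 statements merged into one kernel-verified Lean document; each statement's English description precedes it below -/
import Mathlib

section
/- Let R be a commutative Noetherian ring and S a common multiplicatively closed subset of R, i.e., S is nonempty and for all r, s ∈ S there exists t ∈ S with t ∈ Rr ∩ Rs. Let τ_S denote the covariant R-linear functor on finitely generated R-modules given by τ_S(M) = {m ∈ M : rm = 0 for some r ∈ S}. Then the following are equivalent: (a) τ_S is representable, i.e., naturally isomorphic to Hom_R(L,−) for some finitely generated R-module L; (b) τ_S is finitely generated; (c) S is coprincipal, i.e., there exists s ∈ S with s ∈ ⋂_{r∈S} Rr. -/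
open CategoryTheory

universe u

/-- A covariant `R`-linear functor `F` on finitely generated `R`-modules is
*representable* if it is naturally isomorphic to `h_L = Hom_R(L, -)` for some finitely
generated `R`-module `L`. -/
def CategoryTheory.Functor.IsRepresentableFunctor {R : Type u} [CommRing R]
    (F : FGModuleCat R ⥤ FGModuleCat R) : Prop :=
  ∃ (L : FGModuleCat R) (e : ∀ X : FGModuleCat R, (L ⟶ X) ≃ₗ[R] F.obj X),
    ∀ (X Y : FGModuleCat R) (g : X ⟶ Y) (φ : L ⟶ X), F.map g (e X φ) = e Y (φ ≫ g)

/-- A covariant `R`-linear functor `F` on finitely generated `R`-modules is *finitely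
generated* if there is an objectwise surjective natural transformation `h_L → F`
for some finitely generated `R`-module `L`. -/
def CategoryTheory.Functor.IsFinitelyGeneratedFunctor {R : Type u} [CommRing R]
    (F : FGModuleCat R ⥤ FGModuleCat R) : Prop :=
  ∃ (L : FGModuleCat R) (T : ∀ X : FGModuleCat R, (L ⟶ X) →ₗ[R] F.obj X),
    (∀ (X Y : FGModuleCat R) (g : X ⟶ Y) (φ : L ⟶ X), F.map g (T X φ) = T Y (φ ≫ g)) ∧
    (∀ X : FGModuleCat R, Function.Surjective (T X))

/-- A subset `S ⊆ R` is *common multiplicatively closed* if it is nonempty and for all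
`r, s ∈ S` there is `t ∈ S` with `t ∈ Rr ∩ Rs`. -/
def IsCommonMultClosed {R : Type u} [CommRing R] (S : Set R) : Prop :=
  S.Nonempty ∧ ∀ r ∈ S, ∀ s ∈ S, ∃ t ∈ S, (∃ a : R, t = a * r) ∧ (∃ b : R, t = b * s)

/-- For a common multiplicatively closed subset `S ⊆ R`, the `S`-torsion
`τ_S(M) = {m ∈ M : rm = 0 for some r ∈ S}` is a submodule of `M`. -/
def tauSub {R : Type u} [CommRing R] (S : Set R) (hS : IsCommonMultClosed S)
    (M : Type u) [AddCommGroup M] [Module R M] : Submodule R M where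
  carrier := {m | ∃ r ∈ S, r • m = 0}
  zero_mem' := ⟨hS.1.choose, hS.1.choose_spec, smul_zero _⟩
  add_mem' := by
    rintro m m' ⟨r, hr, hrm⟩ ⟨s, hs, hsm⟩
    obtain ⟨t, ht, ⟨a, rfl⟩, ⟨b, hb⟩⟩ := hS.2 r hr s hs
    refine ⟨a * r, ht, ?_⟩
    rw [smul_add, mul_smul, hrm, smul_zero, hb, mul_smul, hsm, smul_zero, add_zero]
  smul_mem' := by
    rintro c m ⟨r, hr, hrm⟩
    exact ⟨r, hr, by rw [smul_comm, hrm, smul_zero]⟩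

lemma tauSub_map {R : Type u} [CommRing R] (S : Set R) (hS : IsCommonMultClosed S)
    {M N : Type u} [AddCommGroup M] [Module R M] [AddCommGroup N] [Module R N]
    (f : M →ₗ[R] N) : ∀ x ∈ tauSub S hS M, f x ∈ tauSub S hS N := by
  rintro x ⟨r, hr, hrx⟩
  exact ⟨r, hr, by rw [← map_smul, hrx, map_zero]⟩

/-- The torsion functor `τ_S` on finitely generated `R`-modules, for a common
multiplicatively closed subset `S ⊆ R`, with `τ_S(f)` the restriction of `f`. -/
noncomputable def tauFunctor (R : Type u) [CommRing R] [IsNoetherianRing R]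
    (S : Set R) (hS : IsCommonMultClosed S) : FGModuleCat R ⥤ FGModuleCat R where
  obj X := FGModuleCat.of R (tauSub S hS X)
  map {X Y} f := FGModuleCat.ofHom (LinearMap.restrict f.hom.hom (tauSub_map S hS f.hom.hom))
  map_id X := by ext x; rfl
  map_comp f g := by ext x; rfl

/-!
A surjection `h_L → τ_S` is determined by the image `ξ ∈ τ_S(L)` of `𝟙 L`, and every element of
every `τ_S(X)` is an image of `ξ`. Some `s ∈ S` kills `ξ`, hence kills all of `τ_S`; applied to
`1 ∈ τ_S(R/(r))` this says `r ∣ s` for every `r ∈ S`. Conversely, if `s ∈ S` is divisible by every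
element of `S`, then `τ_S(X)` is the `s`-torsion of `X`, which evaluation at `1` identifies with
`Hom(R/(s), X)`.
-/

namespace CategoryTheory.Functor

variable {R : Type u} [CommRing R] {F : FGModuleCat R ⥤ FGModuleCat R}

theorem IsRepresentableFunctor.isFinitelyGeneratedFunctor (hF : F.IsRepresentableFunctor) :
    F.IsFinitelyGeneratedFunctor := by
  obtain ⟨L, e, he⟩ := hF
  exact ⟨L, fun X => (e X).toLinearMap, he, fun X => (e X).surjective⟩

theorem IsFinitelyGeneratedFunctor.exists_forall_exists_map_eq
    (hF : F.IsFinitelyGeneratedFunctor) :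
    ∃ (L : FGModuleCat R) (ξ : F.obj L), ∀ X (y : F.obj X), ∃ φ : L ⟶ X, F.map φ ξ = y := by
  obtain ⟨L, T, hT, hsurj⟩ := hF
  refine ⟨L, T L (𝟙 L), fun X y => ?_⟩
  obtain ⟨φ, rfl⟩ := hsurj X y
  exact ⟨φ, by rw [hT, Category.id_comp]⟩

end CategoryTheory.Functor

section Torsion

variable {R : Type u} [CommRing R] {S : Set R} (hS : IsCommonMultClosed S)

theorem smul_eq_zero_of_mem_tauSub {M : Type u} [AddCommGroup M] [Module R M] {s : R}
    (hs : ∀ r ∈ S, ∃ a : R, s = a * r) {m : M} (hm : m ∈ tauSub S hS M) : s • m = 0 := by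
  obtain ⟨r, hr, hrm⟩ := hm
  obtain ⟨a, rfl⟩ := hs r hr
  rw [mul_smul, hrm, smul_zero]

theorem one_mem_tauSub_quotient {r : R} (hr : r ∈ S) :
    (1 : R ⧸ Ideal.span {r}) ∈ tauSub S hS (R ⧸ Ideal.span {r}) :=
  ⟨r, hr, by simp [Algebra.smul_def]⟩

theorem exists_eq_mul_of_smul_one_eq_zero {r s : R} (h : s • (1 : R ⧸ Ideal.span {r}) = 0) :
    ∃ a : R, s = a * r := by
  rw [Algebra.smul_def, mul_one, Ideal.Quotient.algebraMap_eq, Ideal.Quotient.eq_zero_iff_mem,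
    Ideal.mem_span_singleton'] at h
  obtain ⟨a, ha⟩ := h
  exact ⟨a, ha.symm⟩

theorem exists_forall_smul_eq_zero_of_isFinitelyGeneratedFunctor [IsNoetherianRing R]
    (h : (tauFunctor R S hS).IsFinitelyGeneratedFunctor) :
    ∃ s ∈ S, ∀ (X : FGModuleCat R), ∀ m ∈ tauSub S hS X, s • m = 0 := by
  obtain ⟨L, ξ, hξ⟩ := h.exists_forall_exists_map_eq
  obtain ⟨s, hs, hsξ⟩ := ξ.2
  refine ⟨s, hs, fun X m hm => ?_⟩
  obtain ⟨φ, hφ⟩ := hξ X ⟨m, hm⟩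
  have hm_eq : φ ξ.1 = m := congrArg Subtype.val hφ
  rw [← hm_eq, ← map_smul, hsξ, map_zero]

noncomputable def tauEval {s : R} (hs : s ∈ S) (X : FGModuleCat R) :
    (FGModuleCat.of R (R ⧸ Ideal.span {s}) ⟶ X) →ₗ[R] tauSub S hS X where
  toFun φ := ⟨φ 1, s, hs, by
    rw [← map_smul, Algebra.smul_def, mul_one, Ideal.Quotient.algebraMap_eq,
      Ideal.Quotient.eq_zero_iff_mem.2 (Ideal.mem_span_singleton_self s), map_zero]⟩
  map_add' _ _ := rfl
  map_smul' _ _ := rfl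

theorem tauEval_bijective {s : R} (hs : s ∈ S) {X : FGModuleCat R}
    (hX : ∀ m ∈ tauSub S hS X, s • m = 0) : Function.Bijective (tauEval hS hs X) := by
  refine ⟨fun φ ψ h => ?_, fun m => ?_⟩
  · ext1
    refine Submodule.linearMap_qext _ (LinearMap.ext_ring ?_)
    exact congrArg Subtype.val h
  · refine ⟨FGModuleCat.ofHom (Submodule.liftQSpanSingleton s
      (LinearMap.toSpanSingleton R X m) (hX m m.2)), Subtype.ext ?_⟩
    exact one_smul R (m : X)

theorem isRepresentableFunctor_tauFunctor [IsNoetherianRing R] {s : R} (hs : s ∈ S)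
    (hann : ∀ (X : FGModuleCat R), ∀ m ∈ tauSub S hS X, s • m = 0) :
    (tauFunctor R S hS).IsRepresentableFunctor :=
  ⟨FGModuleCat.of R (R ⧸ Ideal.span {s}),
    fun X => LinearEquiv.ofBijective (tauEval hS hs X) (tauEval_bijective hS hs (hann X)),
    fun _ _ _ _ => rfl⟩

end Torsion

/-- Let `R` be a commutative Noetherian ring and `S` a common
multiplicatively closed subset of `R`.  The following are equivalent: (a) `τ_S` is
representable; (b) `τ_S` is finitely generated; (c) `S` is coprincipal, i.e. there is
`s ∈ S` with `s ∈ ⋂_{r ∈ S} Rr`. -/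
theorem tauFunctor_representable_tfae
    {R : Type u} [CommRing R] [IsNoetherianRing R] (S : Set R)
    (hS : IsCommonMultClosed S) :
    List.TFAE [(tauFunctor R S hS).IsRepresentableFunctor,
      (tauFunctor R S hS).IsFinitelyGeneratedFunctor,
      ∃ s ∈ S, ∀ r ∈ S, ∃ a : R, s = a * r] := by
  tfae_have 1 → 2 := Functor.IsRepresentableFunctor.isFinitelyGeneratedFunctor
  tfae_have 2 → 3 := fun h => by
    obtain ⟨s, hs, hann⟩ := exists_forall_smul_eq_zero_of_isFinitelyGeneratedFunctor hS h
    exact ⟨s, hs, fun r hr => exists_eq_mul_of_smul_one_eq_zero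
      (hann (FGModuleCat.of R (R ⧸ Ideal.span {r})) 1 (one_mem_tauSub_quotient hS hr))⟩
  tfae_have 3 → 1 := fun ⟨s, hs, hdiv⟩ =>
    isRepresentableFunctor_tauFunctor hS hs fun _ _ hm => smul_eq_zero_of_mem_tauSub hS hdiv hm
  tfae_finish
end

section
/- Let R be a commutative Noetherian ring and let A →∂_A B →∂_B C be a complex of R-modules (∂_B ∘ ∂_A = 0) with B finitely generated. Let F be the covariant R-linear functor from finitely generated R-modules to themselves arising from this complex, i.e., F(N) = ker(∂_B ⊗ id_N : B ⊗_R N → C ⊗_R N) / im(∂_A ⊗ id_N : A ⊗_R N → B ⊗_R N). Then F is coherent if and only if F is finitely generated. -/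
/-!
Right exactness of `− ⊗ X` identifies `F(X)` with a natural submodule of `M ⊗ X`, where
`M = B ⧸ im ∂_A`. By Yoneda, a natural transformation `h_K → F` is then determined by one element
`ξ ∈ M ⊗ K`, and it kills `φ : K → X` exactly when `(M ⊗ φ) ξ = 0`. Over a Noetherian ring `M` is
finitely presented, `F₁ → F₀ → M → 0`; lifting `ξ` to `F₀ ⊗ K = Hom(F₀^*, K)` the condition
becomes: `φ ∘ ξ` extends along `F₀^* → F₁^*`, i.e. `φ` factors through the pushout `L` of
`K ← F₀^* → F₁^*`. Since `L` is finitely generated, `h_L → h_K → F → 0` is exact.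
-/


open CategoryTheory TensorProduct

universe u

section TensorHomology

variable {R : Type u} [CommRing R]
variable {A B C : Type u} [AddCommGroup A] [Module R A] [AddCommGroup B] [Module R B]
  [AddCommGroup C] [Module R C]

/-- The homology of `A ⊗ N → B ⊗ N → C ⊗ N` at the middle spot:
`ker(∂_B ⊗ id_N) / im(∂_A ⊗ id_N)`. -/
noncomputable def tensorHomology (dA : A →ₗ[R] B) (dB : B →ₗ[R] C)
    (N : Type u) [AddCommGroup N] [Module R N] : Type u :=
  ↥(LinearMap.ker (LinearMap.rTensor N dB)) ⧸
    (Submodule.comap (LinearMap.ker (LinearMap.rTensor N dB)).subtype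
      (LinearMap.range (LinearMap.rTensor N dA)))

noncomputable instance (dA : A →ₗ[R] B) (dB : B →ₗ[R] C)
    (N : Type u) [AddCommGroup N] [Module R N] :
    AddCommGroup (tensorHomology dA dB N) := by
  unfold tensorHomology; infer_instance

noncomputable instance (dA : A →ₗ[R] B) (dB : B →ₗ[R] C)
    (N : Type u) [AddCommGroup N] [Module R N] :
    Module R (tensorHomology dA dB N) := by
  unfold tensorHomology; infer_instance

lemma ker_map_ker (dB : B →ₗ[R] C) {N N' : Type u} [AddCommGroup N] [Module R N]
    [AddCommGroup N'] [Module R N'] (g : N →ₗ[R] N') :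
    ∀ x ∈ LinearMap.ker (LinearMap.rTensor N dB),
      (LinearMap.lTensor B g) x ∈ LinearMap.ker (LinearMap.rTensor N' dB) := by
  intro x hx
  simp only [LinearMap.mem_ker] at hx ⊢
  have h : LinearMap.rTensor N' dB ∘ₗ LinearMap.lTensor B g
      = LinearMap.lTensor C g ∘ₗ LinearMap.rTensor N dB := by
    rw [LinearMap.rTensor_comp_lTensor, LinearMap.lTensor_comp_rTensor]
  calc (LinearMap.rTensor N' dB) ((LinearMap.lTensor B g) x)
      = (LinearMap.rTensor N' dB ∘ₗ LinearMap.lTensor B g) x := rfl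
    _ = (LinearMap.lTensor C g) ((LinearMap.rTensor N dB) x) := by rw [h]; rfl
    _ = 0 := by rw [hx, map_zero]

/-- The map induced on `tensorHomology` by `g : N → N'`. -/
noncomputable def tensorHomologyMap (dA : A →ₗ[R] B) (dB : B →ₗ[R] C)
    {N N' : Type u} [AddCommGroup N] [Module R N] [AddCommGroup N'] [Module R N']
    (g : N →ₗ[R] N') :
    tensorHomology dA dB N →ₗ[R] tensorHomology dA dB N' :=
  Submodule.mapQ _ _
    (LinearMap.restrict (LinearMap.lTensor B g) (ker_map_ker dB g))
    (by
      rintro ⟨x, hxk⟩ hx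
      simp only [Submodule.mem_comap, LinearMap.mem_range] at hx ⊢
      obtain ⟨y, hy⟩ := hx
      refine ⟨LinearMap.lTensor A g y, ?_⟩
      have h : LinearMap.rTensor N' dA ∘ₗ LinearMap.lTensor A g
          = LinearMap.lTensor B g ∘ₗ LinearMap.rTensor N dA := by
        rw [LinearMap.rTensor_comp_lTensor, LinearMap.lTensor_comp_rTensor]
      have h2 : (LinearMap.rTensor N' dA) ((LinearMap.lTensor A g) y)
          = (LinearMap.lTensor B g) ((LinearMap.rTensor N dA) y) := by
        calc (LinearMap.rTensor N' dA) ((LinearMap.lTensor A g) y)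
            = (LinearMap.rTensor N' dA ∘ₗ LinearMap.lTensor A g) y := rfl
          _ = _ := by rw [h]; rfl
      rw [h2, hy]
      rfl)

noncomputable instance [IsNoetherianRing R] [Module.Finite R B]
    (dA : A →ₗ[R] B) (dB : B →ₗ[R] C)
    (N : Type u) [AddCommGroup N] [Module R N] [Module.Finite R N] :
    Module.Finite R (tensorHomology dA dB N) := by
  unfold tensorHomology; infer_instance

/-- The functor arising from the middle finite complex `A → B → C`, sending a finitely
generated module `N` to the homology of `A ⊗ N → B ⊗ N → C ⊗ N`. -/
noncomputable def tensorHomologyFunctor [IsNoetherianRing R] [Module.Finite R B]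
    (dA : A →ₗ[R] B) (dB : B →ₗ[R] C) : FGModuleCat R ⥤ FGModuleCat R where
  obj X := FGModuleCat.of R (tensorHomology dA dB X)
  map {X Y} g := FGModuleCat.ofHom (tensorHomologyMap dA dB g.hom.hom)
  map_id X := by
    apply FGModuleCat.hom_ext
    apply Submodule.linearMap_qext
    ext x
    show Submodule.Quotient.mk _ = Submodule.Quotient.mk _
    congr 1
    ext
    exact DFunLike.congr_fun (LinearMap.lTensor_id B (↥X)) x.val
  map_comp {X Y Z} g h := by
    apply FGModuleCat.hom_ext
    apply Submodule.linearMap_qext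
    ext x
    show Submodule.Quotient.mk _ = Submodule.Quotient.mk _
    congr 1
    ext
    exact DFunLike.congr_fun (LinearMap.lTensor_comp B h.hom.hom g.hom.hom) x.val

end TensorHomology

/-- A covariant `R`-linear functor `F` on finitely generated `R`-modules is *coherent*
if there are finitely generated `R`-modules `K`, `L` and natural transformations
`h_L → h_K → F` forming an objectwise exact sequence `h_L(X) → h_K(X) → F(X) → 0`. -/
def CategoryTheory.Functor.IsCoherentFunctor {R : Type u} [CommRing R]
    (F : FGModuleCat R ⥤ FGModuleCat R) : Prop :=
  ∃ (K L : FGModuleCat R) (f : K ⟶ L) (T : ∀ X : FGModuleCat R, (K ⟶ X) →ₗ[R] F.obj X),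
    (∀ (X Y : FGModuleCat R) (g : X ⟶ Y) (φ : K ⟶ X), F.map g (T X φ) = T Y (φ ≫ g)) ∧
    (∀ X : FGModuleCat R, Function.Surjective (T X)) ∧
    (∀ (X : FGModuleCat R) (φ : K ⟶ X), T X φ = 0 ↔ ∃ ψ : L ⟶ X, φ = f ≫ ψ)

namespace LinearMap

variable {R : Type*} [CommRing R] {N K Q X : Type*} [AddCommGroup N] [Module R N]
  [AddCommGroup K] [Module R K] [AddCommGroup Q] [Module R Q] [AddCommGroup X] [Module R X]
  (k : N →ₗ[R] K) (t : N →ₗ[R] Q)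

abbrev Pushout : Type _ := (K × Q) ⧸ range (k.prod (-t))

noncomputable def pushoutInl : K →ₗ[R] Pushout k t :=
  (range (k.prod (-t))).mkQ ∘ₗ inl R K Q

theorem exists_eq_comp_pushoutInl_iff (φ : K →ₗ[R] X) :
    (∃ ψ : Pushout k t →ₗ[R] X, φ = ψ ∘ₗ pushoutInl k t) ↔ ∃ y : Q →ₗ[R] X, φ ∘ₗ k = y ∘ₗ t := by
  constructor
  · rintro ⟨ψ, rfl⟩
    refine ⟨ψ ∘ₗ (range (k.prod (-t))).mkQ ∘ₗ inr R K Q, ext fun n => ?_⟩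
    have hrel : (Submodule.Quotient.mk (k n, -t n) : Pushout k t) = 0 :=
      (Submodule.Quotient.mk_eq_zero _).mpr (mem_range_self (k.prod (-t)) n)
    have hsplit : ((k n, 0) : K × Q) = (k n, -t n) + (0, t n) := by simp
    simp only [pushoutInl, comp_apply, Submodule.mkQ_apply, inl_apply, inr_apply]
    rw [hsplit, Submodule.Quotient.mk_add, hrel, zero_add]
  · rintro ⟨y, hy⟩
    have hrel : range (k.prod (-t)) ≤ ker (φ.coprod y) := by
      rintro _ ⟨n, rfl⟩
      simpa [← sub_eq_add_neg, sub_eq_zero] using congr($hy n)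
    exact ⟨(range (k.prod (-t))).liftQ (φ.coprod y) hrel, ext fun a => by simp [pushoutInl]⟩

end LinearMap

section TensorEquivHomDual

open Module LinearMap

variable (R : Type*) [CommRing R] (F : Type*) {F' X Y : Type*} [AddCommGroup F] [Module R F]
  [Module.Free R F] [Module.Finite R F] [AddCommGroup F'] [Module R F']
  [AddCommGroup X] [Module R X] [AddCommGroup Y] [Module R Y]

noncomputable def tensorEquivHomDual (X : Type*) [AddCommGroup X] [Module R X] :
    F ⊗[R] X ≃ₗ[R] (Dual R F →ₗ[R] X) :=
  (LinearEquiv.rTensor X (evalEquiv R F)).trans (dualTensorHomEquiv R (Dual R F) X)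

variable {R F}

@[simp]
theorem tensorEquivHomDual_tmul (x : F) (m : X) (f : Dual R F) :
    tensorEquivHomDual R F X (x ⊗ₜ m) f = f x • m := by
  simp [tensorEquivHomDual, dualTensorHomEquiv]

theorem tensorEquivHomDual_lTensor (φ : X →ₗ[R] Y) (z : F ⊗[R] X) :
    tensorEquivHomDual R F Y (lTensor F φ z) = φ ∘ₗ tensorEquivHomDual R F X z := by
  induction z using TensorProduct.induction_on with
  | zero => ext; simp
  | tmul x m => ext; simp
  | add z w hz hw => simp [hz, hw, comp_add]

theorem tensorEquivHomDual_rTensor [Module.Free R F'] [Module.Finite R F'] (P : F' →ₗ[R] F)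
    (z : F' ⊗[R] X) :
    tensorEquivHomDual R F X (rTensor X P z) = tensorEquivHomDual R F' X z ∘ₗ P.dualMap := by
  induction z using TensorProduct.induction_on with
  | zero => ext; simp
  | tmul x m => ext; simp
  | add z w hz hw => simp [hz, hw, add_comp]

end TensorEquivHomDual

section FinitePresentation

open Module LinearMap

variable {R : Type u} [CommRing R] {M : Type*} [AddCommGroup M] [Module R M]

theorem lTensor_rTensor_eq_zero_iff {K X : Type*} [AddCommGroup K] [Module R K]
    [AddCommGroup X] [Module R X] {F₀ F₁ : Type*} [AddCommGroup F₀] [Module R F₀]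
    [Module.Free R F₀] [Module.Finite R F₀] [AddCommGroup F₁] [Module R F₁]
    [Module.Free R F₁] [Module.Finite R F₁] {P : F₁ →ₗ[R] F₀} {q : F₀ →ₗ[R] M}
    (hPq : Function.Exact P q) (hq : Function.Surjective q) (ξ : F₀ ⊗[R] K) (φ : K →ₗ[R] X) :
    lTensor M φ (rTensor K q ξ) = 0 ↔
      ∃ y : Dual R F₁ →ₗ[R] X, φ ∘ₗ tensorEquivHomDual R F₀ K ξ = y ∘ₗ P.dualMap := by
  have hcomm : lTensor M φ (rTensor K q ξ) = rTensor X q (lTensor F₀ φ ξ) := by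
    rw [← LinearMap.comp_apply, lTensor_comp_rTensor, ← rTensor_comp_lTensor,
      LinearMap.comp_apply]
  rw [hcomm, ← mem_ker, (rTensor_exact X hPq hq).linearMap_ker_eq,
    (tensorEquivHomDual R F₁ X).surjective.exists]
  simp only [mem_range, ← (tensorEquivHomDual R F₀ X).injective.eq_iff,
    tensorEquivHomDual_rTensor, tensorEquivHomDual_lTensor, eq_comm]

theorem Module.FinitePresentation.exists_lTensor_eq_zero_iff_exists_eq_comp
    [Module.FinitePresentation R M] {K : Type u} [AddCommGroup K] [Module R K]
    [Module.Finite R K] (ξ : M ⊗[R] K) :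
    ∃ (L : Type u) (_ : AddCommGroup L) (_ : Module R L) (_ : Module.Finite R L)
      (f : K →ₗ[R] L), ∀ (X : Type*) [AddCommGroup X] [Module R X] (φ : K →ₗ[R] X),
        lTensor M φ ξ = 0 ↔ ∃ ψ : L →ₗ[R] X, φ = ψ ∘ₗ f := by
  obtain ⟨n, m, q, P, hq, hPq⟩ := Module.FinitePresentation.exists_fin' R M
  obtain ⟨ξ, rfl⟩ := rTensor_surjective K hq ξ
  refine ⟨Pushout (tensorEquivHomDual R _ K ξ) P.dualMap, inferInstance, inferInstance,
    inferInstance, pushoutInl _ _, fun X _ _ φ => ?_⟩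
  rw [lTensor_rTensor_eq_zero_iff hPq hq, exists_eq_comp_pushoutInl_iff]

end FinitePresentation

section HomologyEmbedding

open LinearMap

variable {R : Type u} [CommRing R]
variable {A B C : Type u} [AddCommGroup A] [Module R A] [AddCommGroup B] [Module R B]
  [AddCommGroup C] [Module R C] (dA : A →ₗ[R] B) (dB : B →ₗ[R] C)

theorem ker_rTensor_mkQ_range (X : Type*) [AddCommGroup X] [Module R X] :
    ker (rTensor X (range dA).mkQ) = range (rTensor X dA) :=
  (rTensor_exact X (exact_map_mkQ_range dA) (range dA).mkQ_surjective).linearMap_ker_eq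

noncomputable def tensorHomologyToTensor (X : Type u) [AddCommGroup X] [Module R X] :
    tensorHomology dA dB X →ₗ[R] (B ⧸ range dA) ⊗[R] X :=
  Submodule.liftQ _ (rTensor X (range dA).mkQ ∘ₗ (ker (rTensor X dB)).subtype)
    (by rw [ker_comp, ker_rTensor_mkQ_range])

theorem tensorHomologyToTensor_injective (X : Type u) [AddCommGroup X] [Module R X] :
    Function.Injective (tensorHomologyToTensor dA dB X) := by
  rw [← ker_eq_bot]
  exact Submodule.ker_liftQ_eq_bot' _ _ (by rw [ker_comp, ker_rTensor_mkQ_range])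

theorem tensorHomologyToTensor_map {X Y : Type u} [AddCommGroup X] [Module R X]
    [AddCommGroup Y] [Module R Y] (g : X →ₗ[R] Y) (h : tensorHomology dA dB X) :
    tensorHomologyToTensor dA dB Y (tensorHomologyMap dA dB g h) =
      lTensor (B ⧸ range dA) g (tensorHomologyToTensor dA dB X h) := by
  induction h using Submodule.Quotient.induction_on with
  | H x =>
    show rTensor Y (range dA).mkQ (lTensor B g x) = lTensor _ g (rTensor X (range dA).mkQ x)
    rw [← LinearMap.comp_apply, rTensor_comp_lTensor, ← lTensor_comp_rTensor,
      LinearMap.comp_apply]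

end HomologyEmbedding

namespace CategoryTheory.Functor

universe v

theorem IsCoherentFunctor.isFinitelyGeneratedFunctor {R : Type u} [CommRing R]
    {F : FGModuleCat R ⥤ FGModuleCat R} (hF : F.IsCoherentFunctor) :
    F.IsFinitelyGeneratedFunctor :=
  let ⟨K, _, _, T, hnat, hsurj, _⟩ := hF
  ⟨K, T, hnat, hsurj⟩

theorem isCoherentFunctor_of_isFinitelyGeneratedFunctor_of_injective_lTensor {R : Type u}
    [CommRing R] {F : FGModuleCat.{u} R ⥤ FGModuleCat.{v} R}
    (M : Type*) [AddCommGroup M] [Module R M] [Module.FinitePresentation R M]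
    (ι : ∀ X : FGModuleCat R, F.obj X →ₗ[R] M ⊗[R] X) (hι : ∀ X, Function.Injective (ι X))
    (hιnat : ∀ (X Y : FGModuleCat R) (g : X ⟶ Y) (u : F.obj X),
      ι Y (F.map g u) = LinearMap.lTensor M g.hom.hom (ι X u))
    (hF : F.IsFinitelyGeneratedFunctor) : F.IsCoherentFunctor := by
  obtain ⟨K, T, hTnat, hTsurj⟩ := hF
  have hT : ∀ (X : FGModuleCat R) (φ : K ⟶ X),
      ι X (T X φ) = LinearMap.lTensor M φ.hom.hom (ι K (T K (𝟙 K))) := fun X φ => by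
    rw [← hιnat, hTnat, Category.id_comp]
  obtain ⟨L, _, _, _, f, hf⟩ :=
    Module.FinitePresentation.exists_lTensor_eq_zero_iff_exists_eq_comp (ι K (T K (𝟙 K)))
  refine ⟨K, FGModuleCat.of R L, FGModuleCat.ofHom f, T, hTnat, hTsurj, fun X φ => ?_⟩
  rw [← (ι X).map_eq_zero_iff (hι X), hT, hf]
  constructor
  · rintro ⟨ψ, hψ⟩
    exact ⟨FGModuleCat.ofHom ψ, FGModuleCat.hom_ext hψ⟩
  · rintro ⟨ψ, rfl⟩
    exact ⟨ψ.hom.hom, rfl⟩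

end CategoryTheory.Functor

theorem tensorHomologyFunctor_coherent_iff_finitelyGenerated_general
    {R : Type u} [CommRing R] [IsNoetherianRing R]
    {A B C : Type u} [AddCommGroup A] [Module R A] [AddCommGroup B] [Module R B]
    [AddCommGroup C] [Module R C] [Module.Finite R B]
    (dA : A →ₗ[R] B) (dB : B →ₗ[R] C) :
    (tensorHomologyFunctor dA dB).IsCoherentFunctor ↔
      (tensorHomologyFunctor dA dB).IsFinitelyGeneratedFunctor := by
  have := Module.finitePresentation_of_finite R (B ⧸ LinearMap.range dA)
  refine ⟨Functor.IsCoherentFunctor.isFinitelyGeneratedFunctor,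
    Functor.isCoherentFunctor_of_isFinitelyGeneratedFunctor_of_injective_lTensor
      (B ⧸ LinearMap.range dA) (fun X => tensorHomologyToTensor dA dB X)
      (fun X => tensorHomologyToTensor_injective dA dB X)
      (fun X Y g => tensorHomologyToTensor_map dA dB g.hom.hom)⟩

/-- Let `R` be a commutative Noetherian ring and `A →∂_A B →∂_B C` a
complex of `R`-modules with `B` finitely generated.  Let `F` be the functor on finitely
generated `R`-modules arising from this complex,
`F(N) = ker(∂_B ⊗ id_N)/im(∂_A ⊗ id_N)`.  Then `F` is coherent iff it is finitely
generated. -/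
theorem tensorHomologyFunctor_coherent_iff_finitelyGenerated
    {R : Type u} [CommRing R] [IsNoetherianRing R]
    {A B C : Type u} [AddCommGroup A] [Module R A] [AddCommGroup B] [Module R B]
    [AddCommGroup C] [Module R C] [Module.Finite R B]
    (dA : A →ₗ[R] B) (dB : B →ₗ[R] C) (hcomplex : dB ∘ₗ dA = 0) :
    (tensorHomologyFunctor dA dB).IsCoherentFunctor ↔
      (tensorHomologyFunctor dA dB).IsFinitelyGeneratedFunctor :=
  tensorHomologyFunctor_coherent_iff_finitelyGenerated_general dA dB
end
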